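/- arXiv:1406.5313 — 2 statements merged into one kernel-verified Lean document; each statement's English description precedes it below -/
import Mathlib

section
/- Suppose 𝒥 is a T₀-system. Let t ↦ μ^t (t ≥ 0) be a solution of the recombination equation such that μ^t is a probability mass function on X for every t. Then μ^t converges pointwise as t → ∞ to the product measure ν(x) = Π_{i∈Λ} μ_i^0(x_i), where μ_i^0 is the one-dimensional marginal of the initial condition μ^0 at coordinate i. -/
open Finset

/-- Restriction of a word to a set of coordinates `M`. -/
def restrictW {Λ : Type*} (K : Λ → Type*) (M : Finset Λ) (x : ∀ i, K i) :
    ∀ i : M, K i := fun i => x i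

/-- Marginal of `μ` on the set of coordinates `M`. -/
def marginal {Λ : Type*} [Fintype Λ] [DecidableEq Λ] (K : Λ → Type*)
    [∀ i, Fintype (K i)] [∀ i, DecidableEq (K i)]
    (μ : (∀ i, K i) → ℝ) (M : Finset Λ) (a : ∀ i : M, K i) : ℝ :=
  ∑ x : ∀ i, K i, if restrictW K M x = a then μ x else 0

/-- One-dimensional marginal of `μ` at coordinate `i`. -/
def marg1 {Λ : Type*} [Fintype Λ] [DecidableEq Λ] (K : Λ → Type*)
    [∀ i, Fintype (K i)] [∀ i, DecidableEq (K i)]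
    (μ : (∀ i, K i) → ℝ) (i : Λ) (a : K i) : ℝ :=
  ∑ x : ∀ i, K i, if x i = a then μ x else 0

/-- `I`-recombination: the word equal to `a` on `I` and to `x` off `I`. -/
def recombW {Λ : Type*} [DecidableEq Λ] (K : Λ → Type*) (I : Finset Λ)
    (x : ∀ i, K i) (a : ∀ i : I, K i) : ∀ i, K i :=
  fun i => if h : i ∈ I then a ⟨i, h⟩ else x i

/-- Right hand side of the recombination equation. -/
def recombRHS {Λ : Type*} [Fintype Λ] [DecidableEq Λ] (K : Λ → Type*)
    [∀ i, Fintype (K i)] [∀ i, DecidableEq (K i)]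
    (𝒥 : Finset (Finset Λ))
    (φ : ∀ I : Finset Λ, (∀ i : I, K i) → (∀ i : I, K i) → ℝ)
    (μ : (∀ i, K i) → ℝ) (x : ∀ i, K i) : ℝ :=
  ∑ I ∈ 𝒥, ∑ y : ∀ i : I, K i,
    (φ I y (restrictW K I x) * marginal K μ I (restrictW K I x) * μ (recombW K I x y)
      - φ I (restrictW K I x) y * marginal K μ I y * μ x)

/-- A probability mass function on `∀ i, K i`. -/
def IsPMF {Λ : Type*} [Fintype Λ] [DecidableEq Λ] (K : Λ → Type*) [∀ i, Fintype (K i)]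
    (μ : (∀ i, K i) → ℝ) : Prop :=
  (∀ x, 0 ≤ μ x) ∧ ∑ x : ∀ i, K i, μ x = 1

/-- `𝒥`-separated measure. -/
def IsSeparated {Λ : Type*} [Fintype Λ] [DecidableEq Λ] (K : Λ → Type*)
    [∀ i, Fintype (K i)] [∀ i, DecidableEq (K i)]
    (𝒥 : Finset (Finset Λ)) (μ : (∀ i, K i) → ℝ) : Prop :=
  ∀ I ∈ 𝒥, ∀ x, μ x = marginal K μ I (restrictW K I x) * marginal K μ Iᶜ (restrictW K Iᶜ x)

/-- A `T₀`-system of frames. -/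
def IsT0 {Λ : Type*} (𝒥 : Finset (Finset Λ)) : Prop :=
  ∀ i j : Λ, i ≠ j → ∃ I ∈ 𝒥, (i ∈ I ∧ j ∉ I) ∨ (j ∈ I ∧ i ∉ I)

open scoped Topology

open Filter

/-!
Recombination conserves the one-dimensional marginals, and the negative entropy `∑ μ log μ` is
a Lyapunov function: writing the equation in weak form and symmetrising, its derivative is at most
minus half a sum of squares (`separationDefect`) that vanishes exactly when `μ` is separated along
every frame of `𝒥`. This needs care at words of mass zero: a word that ever carries mass keeps
it by Grönwall, and a word that never does receives no recombination influx. As the entropy is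
bounded below, the defect is small at arbitrarily late times, so some limit point `ν` of the
trajectory is separated along all frames; for a T₀-system this makes `ν` the product of its
marginals, which are those of `μ⁰`. Every limit point has the same marginals and, by
monotonicity, the same entropy as `ν`, so it equals `ν` by the equality case of Gibbs'
inequality; compactness then gives convergence.
-/

theorem two_mul_sum_sum_mul_of_antisymm {α : Type*} [Fintype α] {w : α → α → ℝ}
    (hw : ∀ a b, w b a = -w a b) (g : α → ℝ) :
    2 * ∑ a, ∑ b, w a b * g a = ∑ a, ∑ b, w a b * (g a - g b) := by
  have hswap : ∑ a, ∑ b, w a b * g b = -∑ a, ∑ b, w a b * g a := by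
    rw [Finset.sum_comm, ← Finset.sum_neg_distrib]
    refine Finset.sum_congr rfl fun a _ => ?_
    rw [← Finset.sum_neg_distrib]
    refine Finset.sum_congr rfl fun b _ => ?_
    rw [hw]
    ring
  simp only [mul_sub, Finset.sum_sub_distrib, hswap]
  ring

theorem sq_sub_le_sub_mul_log_sub {p q : ℝ} (hp : 0 < p) (hp1 : p ≤ 1) (hq : 0 < q)
    (hq1 : q ≤ 1) : (p - q) ^ 2 ≤ (p - q) * (Real.log p - Real.log q) := by
  wlog hqp : q ≤ p generalizing p q
  · have := this hq hq1 hp hp1 (le_of_not_ge hqp)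
    linarith
  -- `log p - log q ≥ 1 - q / p = (p - q) / p ≥ p - q`
  have hlog : 1 - q / p ≤ Real.log p - Real.log q := by
    have := Real.one_sub_inv_le_log_of_pos (div_pos hp hq)
    rwa [inv_div, Real.log_div hp.ne' hq.ne'] at this
  have hdiv : p - q ≤ 1 - q / p := by
    rw [one_sub_div hp.ne', le_div_iff₀ hp]
    nlinarith
  nlinarith

theorem mul_klFun_div {p q : ℝ} (hq : 0 < q) :
    q * InformationTheory.klFun (p / q) = p * Real.log p - p * Real.log q - p + q := by
  rcases eq_or_ne p 0 with rfl | hp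
  · simp [InformationTheory.klFun_zero]
  rw [InformationTheory.klFun_apply, Real.log_div hp hq.ne']
  field_simp
  ring

/-- Gibbs' inequality in its equality case. -/
theorem eq_of_sum_mul_log_eq {α : Type*} [Fintype α] {p q : α → ℝ} (hp : ∀ x, 0 ≤ p x)
    (hq : ∀ x, 0 ≤ q x) (hsum : ∑ x, p x = ∑ x, q x) (habs : ∀ x, q x = 0 → p x = 0)
    (hlog : ∑ x, p x * Real.log (p x) = ∑ x, p x * Real.log (q x)) : p = q := by
  set κ : α → ℝ := fun x => p x * Real.log (p x) - p x * Real.log (q x) - p x + q x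
  have hκ : ∀ x, 0 < q x → κ x = q x * InformationTheory.klFun (p x / q x) :=
    fun x hx => (mul_klFun_div hx).symm
  have hκ_nonneg : ∀ x, 0 ≤ κ x := by
    intro x
    rcases (hq x).eq_or_lt with hx | hx
    · simp [κ, ← hx, habs x hx.symm]
    · rw [hκ x hx]
      exact mul_nonneg hx.le (InformationTheory.klFun_nonneg (div_nonneg (hp x) hx.le))
  have hκ_sum : ∑ x, κ x = 0 := by
    simp only [κ, Finset.sum_add_distrib, Finset.sum_sub_distrib, hlog, hsum]
    ring
  funext x
  have hx0 := (Finset.sum_eq_zero_iff_of_nonneg fun y _ => hκ_nonneg y).mp hκ_sum x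
    (Finset.mem_univ x)
  rcases (hq x).eq_or_lt with hx | hx
  · rw [← hx, habs x hx.symm]
  · rw [hκ x hx, mul_eq_zero, InformationTheory.klFun_eq_zero_iff (div_nonneg (hp x) hx.le),
      div_eq_one_iff_eq hx.ne'] at hx0
    exact hx0.resolve_left hx.ne'

noncomputable def negEntropy {α : Type*} [Fintype α] (ν : α → ℝ) : ℝ := ∑ x, ν x * Real.log (ν x)

theorem one_sub_card_le_negEntropy {α : Type*} [Fintype α] {ν : α → ℝ} (hν : ∀ x, 0 ≤ ν x)
    (hsum : ∑ x, ν x = 1) : 1 - Fintype.card α ≤ negEntropy ν := by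
  calc (1 : ℝ) - Fintype.card α = ∑ x, (ν x - 1) := by simp [Finset.sum_sub_distrib, hsum]
    _ ≤ negEntropy ν := Finset.sum_le_sum fun x _ => Real.self_sub_one_le_mul_log (hν x)

theorem continuous_negEntropy {α : Type*} [Fintype α] : Continuous (negEntropy (α := α)) :=
  continuous_finsetSum _ fun x _ => Real.continuous_mul_log.comp (continuous_apply x)

section RealAnalysis

open Set

theorem monotoneOn_Ici_of_hasDerivWithinAt_nonneg {f f' : ℝ → ℝ} {a : ℝ}
    (hf : ∀ t ∈ Ici a, HasDerivWithinAt f (f' t) (Ici a) t) (hf' : ∀ t ∈ Ioi a, 0 ≤ f' t) :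
    MonotoneOn f (Ici a) :=
  monotoneOn_of_hasDerivWithinAt_nonneg (convex_Ici a) (fun t ht => (hf t ht).continuousWithinAt)
    (by simpa using fun t ht => (hf t (mem_Ici_of_Ioi ht)).mono Ioi_subset_Ici_self)
    (by simpa using hf')

theorem antitoneOn_Ici_of_hasDerivWithinAt_nonpos {f f' : ℝ → ℝ} {a : ℝ}
    (hf : ∀ t ∈ Ici a, HasDerivWithinAt f (f' t) (Ici a) t) (hf' : ∀ t ∈ Ioi a, f' t ≤ 0) :
    AntitoneOn f (Ici a) :=
  antitoneOn_of_hasDerivWithinAt_nonpos (convex_Ici a) (fun t ht => (hf t ht).continuousWithinAt)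
    (by simpa using fun t ht => (hf t (mem_Ici_of_Ioi ht)).mono Ioi_subset_Ici_self)
    (by simpa using hf')

-- Grönwall: `f * exp (C * r)` is nondecreasing in `r`.
theorem pos_of_hasDerivWithinAt_ge_neg_mul {f f' : ℝ → ℝ} {C s t : ℝ}
    (hf : ∀ r ∈ Ici s, HasDerivWithinAt f (f' r) (Ici s) r) (hf' : ∀ r ∈ Ici s, -(C * f r) ≤ f' r)
    (hs : 0 < f s) (hst : s ≤ t) : 0 < f t := by
  have hmono : MonotoneOn (fun r => f r * Real.exp (C * r)) (Ici s) := by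
    refine monotoneOn_Ici_of_hasDerivWithinAt_nonneg (fun r hr => (hf r hr).mul
      (((hasDerivAt_id r).const_mul C).exp.hasDerivWithinAt)) fun r hr => ?_
    have := hf' r (mem_Ici_of_Ioi hr)
    have hexp := Real.exp_pos (C * r)
    simp only [id, mul_one]
    nlinarith
  have := hmono self_mem_Ici hst hst
  exact pos_of_mul_pos_left ((mul_pos hs (Real.exp_pos _)).trans_le this) (Real.exp_pos _).le

theorem frequently_lt_of_hasDerivWithinAt_le_neg {f f' g : ℝ → ℝ} {T B : ℝ}
    (hf : ∀ t ∈ Ici T, HasDerivWithinAt f (f' t) (Ici T) t) (hf' : ∀ t ∈ Ici T, f' t ≤ -g t)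
    (hB : ∀ t ∈ Ici T, B ≤ f t) {ε : ℝ} (hε : 0 < ε) : ∃ᶠ t in atTop, g t < ε := by
  intro hge
  obtain ⟨M, hM⟩ := eventually_atTop.mp (hge.mono fun t h => le_of_not_gt h)
  set M' := max M T
  -- if `g ≥ ε` from `M'` on, then `f` decreases at least linearly, contradicting `B ≤ f`
  have hanti : AntitoneOn (fun t => f t + ε * t) (Ici M') := by
    refine antitoneOn_Ici_of_hasDerivWithinAt_nonpos (f' := fun t => f' t + ε) (fun t ht => ?_)
      fun t ht => ?_
    · have ht' : t ∈ Ici T := le_trans (le_max_right M T) ht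
      exact ((hf t ht').mono (Ici_subset_Ici.mpr (le_max_right M T))).add
        (by simpa using (hasDerivWithinAt_id t (Ici M')).const_mul ε)
    · have ht' : M' ≤ t := le_of_lt ht
      have := hf' t (le_trans (le_max_right M T) ht')
      have := hM t (le_trans (le_max_left M T) ht')
      linarith
  set t := M' + (f M' - B + 1) / ε
  have hMt : M' ≤ t := by
    have := hB M' (le_max_right M T)
    have : 0 ≤ (f M' - B + 1) / ε := div_nonneg (by linarith) hε.le
    linarith
  have h1 := hanti self_mem_Ici hMt hMt
  have h2 := hB t (le_trans (le_max_right M T) hMt)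
  have h3 : ε * t = ε * M' + (f M' - B + 1) := by
    simp only [t]
    field_simp
  dsimp only at h1
  linarith

theorem exists_tendsto_of_antitoneOn_Ici {f : ℝ → ℝ} {T B : ℝ} (hf : AntitoneOn f (Ici T))
    (hB : ∀ t ∈ Ici T, B ≤ f t) : ∃ L, Tendsto f atTop (𝓝 L) := by
  have hanti : Antitone fun t => f (max T t) := fun a b hab =>
    hf (le_max_left T a) (le_max_left T b) (max_le_max le_rfl hab)
  refine ⟨_, (tendsto_atTop_ciInf hanti ⟨B, ?_⟩).congr' ?_⟩
  · rintro _ ⟨t, rfl⟩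
    exact hB _ (le_max_left T t)
  · filter_upwards [eventually_ge_atTop T] with t ht
    rw [max_eq_right ht]

end RealAnalysis

theorem IsCompact.exists_mapClusterPt_le_of_frequently_lt {X : Type*} [TopologicalSpace X]
    [FirstCountableTopology X] {s : Set X} (hs : IsCompact s) {f : ℝ → X}
    (hf : ∀ᶠ t in atTop, f t ∈ s) {g : X → ℝ} (hg : Continuous g)
    (hfreq : ∀ ε > 0, ∃ᶠ t in atTop, g (f t) < ε) :
    ∃ x ∈ s, MapClusterPt x atTop f ∧ g x ≤ 0 := by
  obtain ⟨N, hN⟩ := eventually_atTop.mp hf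
  have hτ : ∀ n : ℕ, ∃ t ≥ max (n : ℝ) N, g (f t) < 1 / (n + 1) := fun n =>
    frequently_atTop.mp (hfreq _ Nat.one_div_pos_of_nat) _
  choose τ hτ_ge hτ_lt using hτ
  obtain ⟨x, hx, ψ, hψ, hlim⟩ :=
    hs.tendsto_subseq fun n => hN _ ((le_max_right _ _).trans (hτ_ge n))
  have hτψ : Tendsto (τ ∘ ψ) atTop atTop :=
    tendsto_atTop_mono (fun n => (Nat.cast_le.mpr (hψ.id_le n)).trans
      ((le_max_left _ _).trans (hτ_ge (ψ n)))) tendsto_natCast_atTop_atTop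
  refine ⟨x, hx, hlim.mapClusterPt.of_comp hτψ, le_of_tendsto_of_tendsto'
    ((hg.tendsto x).comp hlim) (tendsto_one_div_add_atTop_nhds_zero_nat.comp hψ.tendsto_atTop)
    fun n => (hτ_lt (ψ n)).le⟩

theorem MapClusterPt.apply_eq_of_tendsto {α X Y : Type*} [TopologicalSpace X] [TopologicalSpace Y]
    [T2Space Y] {l : Filter α} {f : α → X} {x : X} {g : X → Y} {y : Y}
    (hx : MapClusterPt x l f) (hg : Continuous g) (hgf : Tendsto (g ∘ f) l (𝓝 y)) : g x = y :=
  eq_of_nhds_neBot (ClusterPt.mono (hx.continuousAt_comp hg.continuousAt) hgf)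

section Splitting

variable {Λ : Type*} [Fintype Λ] [DecidableEq Λ] {K : Λ → Type*}

def glue (I : Finset Λ) (u : ∀ i : (Iᶜ : Finset Λ), K i) (a : ∀ i : I, K i) : ∀ i, K i :=
  fun i => if h : i ∈ I then a ⟨i, h⟩ else u ⟨i, by simpa using h⟩

theorem glue_of_mem {I : Finset Λ} {u : ∀ i : (Iᶜ : Finset Λ), K i} {a : ∀ i : I, K i}
    {i : Λ} (h : i ∈ I) : glue I u a i = a ⟨i, h⟩ := dif_pos h

theorem glue_of_not_mem {I : Finset Λ} {u : ∀ i : (Iᶜ : Finset Λ), K i} {a : ∀ i : I, K i}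
    {i : Λ} (h : i ∉ I) : glue I u a i = u ⟨i, by simpa using h⟩ := dif_neg h

@[simp] theorem restrictW_glue (I : Finset Λ) (u : ∀ i : (Iᶜ : Finset Λ), K i)
    (a : ∀ i : I, K i) : restrictW K I (glue I u a) = a :=
  funext fun i => glue_of_mem i.2

@[simp] theorem restrictW_compl_glue (I : Finset Λ) (u : ∀ i : (Iᶜ : Finset Λ), K i)
    (a : ∀ i : I, K i) : restrictW K Iᶜ (glue I u a) = u :=
  funext fun i => glue_of_not_mem (Finset.mem_compl.mp i.2)

@[simp] theorem glue_restrictW (I : Finset Λ) (x : ∀ i, K i) :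
    glue I (restrictW K Iᶜ x) (restrictW K I x) = x := by
  funext i
  by_cases h : i ∈ I
  · exact glue_of_mem h
  · exact glue_of_not_mem h

@[simp] theorem recombW_glue (I : Finset Λ) (u : ∀ i : (Iᶜ : Finset Λ), K i)
    (a b : ∀ i : I, K i) : recombW K I (glue I u a) b = glue I u b := by
  funext i
  by_cases h : i ∈ I <;> simp [recombW, glue, h]

variable (K) in
def splitEquiv (I : Finset Λ) :
    (∀ i, K i) ≃ (∀ i : (Iᶜ : Finset Λ), K i) × (∀ i : I, K i) where
  toFun x := (restrictW K Iᶜ x, restrictW K I x)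
  invFun p := glue I p.1 p.2
  left_inv := glue_restrictW I
  right_inv p := by simp

variable [∀ i, Fintype (K i)]

theorem sum_eq_sum_sum_glue {M : Type*} [AddCommMonoid M] (I : Finset Λ) (f : (∀ i, K i) → M) :
    ∑ x, f x = ∑ u : ∀ i : (Iᶜ : Finset Λ), K i, ∑ a : ∀ i : I, K i, f (glue I u a) := by
  rw [← (splitEquiv K I).symm.sum_comp, Fintype.sum_prod_type]
  rfl

variable [∀ i, DecidableEq (K i)]

theorem marginal_eq_sum_glue (μ : (∀ i, K i) → ℝ) (I : Finset Λ) (a : ∀ i : I, K i) :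
    marginal K μ I a = ∑ u : ∀ i : (Iᶜ : Finset Λ), K i, μ (glue I u a) := by
  rw [marginal, sum_eq_sum_sum_glue I, Finset.sum_comm]
  simp

theorem marginal_compl_eq_sum_glue (μ : (∀ i, K i) → ℝ) (I : Finset Λ)
    (u : ∀ i : (Iᶜ : Finset Λ), K i) :
    marginal K μ Iᶜ u = ∑ a : ∀ i : I, K i, μ (glue I u a) := by
  rw [marginal, sum_eq_sum_sum_glue I]
  simp

theorem sum_marginal (μ : (∀ i, K i) → ℝ) (I : Finset Λ) :
    ∑ a : ∀ i : I, K i, marginal K μ I a = ∑ x, μ x := by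
  rw [sum_eq_sum_sum_glue I μ, Finset.sum_comm]
  simp_rw [marginal_eq_sum_glue]

end Splitting

section Product

variable {Λ : Type*} [Fintype Λ] [DecidableEq Λ] {K : Λ → Type*}
  [∀ i, Fintype (K i)] [∀ i, DecidableEq (K i)]

/-- `marginal K μ A` read at the restriction of a full word, so that `A` may vary. -/
def marginalAt (μ : (∀ i, K i) → ℝ) (A : Finset Λ) (x : ∀ i, K i) : ℝ :=
  ∑ y, if ∀ i ∈ A, y i = x i then μ y else 0

theorem marginalAt_eq_marginal (μ : (∀ i, K i) → ℝ) (A : Finset Λ) (x : ∀ i, K i) :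
    marginalAt μ A x = marginal K μ A (restrictW K A x) := by
  refine Finset.sum_congr rfl fun y _ => if_congr ?_ rfl rfl
  exact ⟨fun h => funext fun i => h i i.2, fun h i hi => congrFun h ⟨i, hi⟩⟩

theorem marginalAt_univ (μ : (∀ i, K i) → ℝ) (x : ∀ i, K i) : marginalAt μ Finset.univ x = μ x := by
  simp [marginalAt, ← funext_iff]

theorem marginalAt_empty (μ : (∀ i, K i) → ℝ) (x : ∀ i, K i) : marginalAt μ ∅ x = ∑ y, μ y := by
  simp [marginalAt]

theorem marginalAt_singleton (μ : (∀ i, K i) → ℝ) (i : Λ) (x : ∀ i, K i) :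
    marginalAt μ {i} x = marg1 K μ i (x i) := by
  simp [marginalAt, marg1]

def IsSeparatedAlong (μ : (∀ i, K i) → ℝ) (M : Finset Λ) : Prop :=
  ∀ x, μ x = marginalAt μ M x * marginalAt μ Mᶜ x

theorem isSeparatedAlong_iff (μ : (∀ i, K i) → ℝ) (M : Finset Λ) :
    IsSeparatedAlong μ M ↔
      ∀ x, μ x = marginal K μ M (restrictW K M x) * marginal K μ Mᶜ (restrictW K Mᶜ x) := by
  simp only [IsSeparatedAlong, marginalAt_eq_marginal]

theorem marginalAt_eq_mul_of_isSeparatedAlong {μ : (∀ i, K i) → ℝ} {I : Finset Λ}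
    (hμ : IsSeparatedAlong μ I) (A : Finset Λ) (x : ∀ i, K i) :
    marginalAt μ A x = marginalAt μ (A ∩ I) x * marginalAt μ (A \ I) x := by
  set p : (∀ i : I, K i) → Prop := fun a => ∀ i ∈ A ∩ I, glue I (restrictW K Iᶜ x) a i = x i
  set q : (∀ i : (Iᶜ : Finset Λ), K i) → Prop :=
    fun u => ∀ i ∈ A \ I, glue I u (restrictW K I x) i = x i
  have hp : ∀ u a, (∀ i ∈ A ∩ I, glue I u a i = x i) ↔ p a := fun u a =>
    forall₂_congr fun i hi => by rw [glue_of_mem (Finset.mem_inter.mp hi).2,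
      glue_of_mem (Finset.mem_inter.mp hi).2]
  have hq : ∀ u a, (∀ i ∈ A \ I, glue I u a i = x i) ↔ q u := fun u a =>
    forall₂_congr fun i hi => by rw [glue_of_not_mem (Finset.mem_sdiff.mp hi).2,
      glue_of_not_mem (Finset.mem_sdiff.mp hi).2]
  have hA : ∀ u a, (∀ i ∈ A, glue I u a i = x i) ↔ p a ∧ q u := by
    intro u a
    rw [← hp u a, ← hq u a]
    refine ⟨fun h => ⟨fun i hi => h i (Finset.mem_inter.mp hi).1,
      fun i hi => h i (Finset.mem_sdiff.mp hi).1⟩, fun h i hi => ?_⟩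
    by_cases hiI : i ∈ I
    exacts [h.1 i (Finset.mem_inter.mpr ⟨hi, hiI⟩), h.2 i (Finset.mem_sdiff.mpr ⟨hi, hiI⟩)]
  have hsplit : ∀ u a, μ (glue I u a) = marginal K μ I a * marginal K μ Iᶜ u := fun u a => by
    rw [hμ, marginalAt_eq_marginal, marginalAt_eq_marginal, restrictW_glue, restrictW_compl_glue]
  have h1 : marginalAt μ (A ∩ I) x = ∑ a, if p a then marginal K μ I a else 0 := by
    rw [marginalAt, sum_eq_sum_sum_glue I, Finset.sum_comm]
    refine Finset.sum_congr rfl fun a _ => ?_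
    rw [Finset.sum_congr rfl fun u _ => if_congr (hp u a) rfl rfl]
    by_cases h : p a <;> simp [h, marginal_eq_sum_glue]
  have h2 : marginalAt μ (A \ I) x = ∑ u, if q u then marginal K μ Iᶜ u else 0 := by
    rw [marginalAt, sum_eq_sum_sum_glue I]
    refine Finset.sum_congr rfl fun u _ => ?_
    rw [Finset.sum_congr rfl fun a _ => if_congr (hq u a) rfl rfl]
    by_cases h : q u <;> simp [h, marginal_compl_eq_sum_glue]
  rw [h1, h2, Finset.sum_mul_sum, marginalAt, sum_eq_sum_sum_glue I, Finset.sum_comm]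
  refine Finset.sum_congr rfl fun a _ => Finset.sum_congr rfl fun u _ => ?_
  rw [if_congr (hA u a) rfl rfl, hsplit, ite_zero_mul_ite_zero]

variable {μ : (∀ i, K i) → ℝ}

namespace IsSeparatedAlong

theorem compl {M : Finset Λ} (h : IsSeparatedAlong μ M) : IsSeparatedAlong μ Mᶜ := fun x => by
  rw [compl_compl, mul_comm]
  exact h x

theorem univ (hμ : ∑ y, μ y = 1) : IsSeparatedAlong μ Finset.univ := fun x => by
  rw [marginalAt_univ, Finset.compl_univ, marginalAt_empty, hμ, mul_one]

theorem inter {I J : Finset Λ} (hI : IsSeparatedAlong μ I) (hJ : IsSeparatedAlong μ J) :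
    IsSeparatedAlong μ (I ∩ J) := fun x => by
  have h1 := marginalAt_eq_mul_of_isSeparatedAlong hJ I x
  have h2 := marginalAt_eq_mul_of_isSeparatedAlong hI (I ∩ J)ᶜ x
  rw [show (I ∩ J)ᶜ ∩ I = I \ J by ext; simp; tauto,
    show (I ∩ J)ᶜ \ I = Iᶜ by ext; simp; tauto] at h2
  rw [h2, hI x, h1]
  ring

theorem finset_inf (hμ : ∑ y, μ y = 1) {ι : Type*} (s : Finset ι) {C : ι → Finset Λ}
    (h : ∀ j ∈ s, IsSeparatedAlong μ (C j)) : IsSeparatedAlong μ (s.inf C) := by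
  classical
  induction s using Finset.induction_on with
  | empty => exact univ hμ
  | insert j s _ ih =>
    rw [Finset.inf_insert]
    exact (h j (Finset.mem_insert_self j s)).inter
      (ih fun k hk => h k (Finset.mem_insert_of_mem hk))

theorem singleton_of_isT0 (hμ : ∑ y, μ y = 1) {𝒥 : Finset (Finset Λ)} (hT0 : IsT0 𝒥)
    (hsep : ∀ I ∈ 𝒥, IsSeparatedAlong μ I) (i : Λ) : IsSeparatedAlong μ {i} := by
  have hC : ∀ j, ∃ C, IsSeparatedAlong μ C ∧ i ∈ C ∧ (j ∈ C → j = i) := by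
    intro j
    by_cases hji : j = i
    · exact ⟨Finset.univ, univ hμ, Finset.mem_univ i, fun _ => hji⟩
    obtain ⟨I, hI, ⟨hiI, hjI⟩ | ⟨hjI, hiI⟩⟩ := hT0 i j (Ne.symm hji)
    · exact ⟨I, hsep I hI, hiI, fun h => absurd h hjI⟩
    · exact ⟨Iᶜ, (hsep I hI).compl, Finset.mem_compl.mpr hiI,
        fun h => absurd hjI (Finset.mem_compl.mp h)⟩
  choose C hCsep hiC hC using hC
  have hinf : Finset.univ.inf C = {i} := by
    ext k
    simp only [Finset.mem_inf, Finset.mem_univ, true_implies, Finset.mem_singleton]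
    exact ⟨fun h => hC k (h k), fun h j => h ▸ hiC j⟩
  rw [← hinf]
  exact finset_inf hμ Finset.univ fun j _ => hCsep j

end IsSeparatedAlong

theorem marginalAt_eq_prod (hμ : ∑ y, μ y = 1) (h : ∀ i, IsSeparatedAlong μ {i})
    (A : Finset Λ) (x : ∀ i, K i) : marginalAt μ A x = ∏ i ∈ A, marg1 K μ i (x i) := by
  induction A using Finset.induction_on with
  | empty => rw [marginalAt_empty, hμ, Finset.prod_empty]
  | insert j A hj ih =>
    rw [marginalAt_eq_mul_of_isSeparatedAlong (h j), Finset.insert_inter_of_mem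
      (Finset.mem_singleton_self j), Finset.inter_singleton_of_notMem hj, Finset.insert_empty,
      Finset.insert_sdiff_of_mem _ (Finset.mem_singleton_self j),
      Finset.sdiff_singleton_eq_erase, Finset.erase_eq_of_notMem hj, marginalAt_singleton, ih,
      Finset.prod_insert hj]

theorem eq_prod_marg1_of_isSeparated {𝒥 : Finset (Finset Λ)} (hT0 : IsT0 𝒥)
    (hsep : IsSeparated K 𝒥 μ) (hμ : ∑ y, μ y = 1) (x : ∀ i, K i) :
    μ x = ∏ i, marg1 K μ i (x i) := by
  have hsingle := IsSeparatedAlong.singleton_of_isT0 hμ hT0 fun I hI =>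
    (isSeparatedAlong_iff μ I).mpr (hsep I hI)
  rw [← marginalAt_univ μ x, marginalAt_eq_prod hμ hsingle]

end Product

section Flux

variable {Λ : Type*} [Fintype Λ] [DecidableEq Λ] {K : Λ → Type*}
  [∀ i, Fintype (K i)] [∀ i, DecidableEq (K i)]

-- Net flow from `glue I u b` into `glue I u a` through frame `I`, per unit of the rate `φ I a b`.
def recombFlux (ν : (∀ i, K i) → ℝ) (I : Finset Λ) (u : ∀ i : (Iᶜ : Finset Λ), K i)
    (a b : ∀ i : I, K i) : ℝ :=
  marginal K ν I a * ν (glue I u b) - marginal K ν I b * ν (glue I u a)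

theorem recombFlux_swap (ν : (∀ i, K i) → ℝ) (I : Finset Λ) (u : ∀ i : (Iᶜ : Finset Λ), K i)
    (a b : ∀ i : I, K i) : recombFlux ν I u b a = -recombFlux ν I u a b := by
  simp only [recombFlux]
  ring

theorem sum_recombFlux (ν : (∀ i, K i) → ℝ) (I : Finset Λ) (a b : ∀ i : I, K i) :
    ∑ u, recombFlux ν I u a b = 0 := by
  simp only [recombFlux, Finset.sum_sub_distrib, ← Finset.mul_sum, ← marginal_eq_sum_glue]
  ring

variable {𝒥 : Finset (Finset Λ)} {φ : ∀ I : Finset Λ, (∀ i : I, K i) → (∀ i : I, K i) → ℝ}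

theorem sum_mul_recombRHS (hφsymm : ∀ I ∈ 𝒥, ∀ a b, φ I a b = φ I b a)
    (ν : (∀ i, K i) → ℝ) (g : (∀ i, K i) → ℝ) :
    ∑ x, g x * recombRHS K 𝒥 φ ν x =
      ∑ I ∈ 𝒥, ∑ u, ∑ a, ∑ b, φ I a b * recombFlux ν I u a b * g (glue I u a) := by
  simp only [recombRHS, Finset.mul_sum]
  rw [Finset.sum_comm]
  refine Finset.sum_congr rfl fun I hI => ?_
  rw [sum_eq_sum_sum_glue I]
  refine Finset.sum_congr rfl fun u _ => Finset.sum_congr rfl fun a _ =>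
    Finset.sum_congr rfl fun b _ => ?_
  rw [restrictW_glue, recombW_glue, recombFlux, hφsymm I hI b a]
  ring

theorem two_mul_sum_mul_recombRHS (hφsymm : ∀ I ∈ 𝒥, ∀ a b, φ I a b = φ I b a)
    (ν : (∀ i, K i) → ℝ) (g : (∀ i, K i) → ℝ) :
    2 * ∑ x, g x * recombRHS K 𝒥 φ ν x =
      ∑ I ∈ 𝒥, ∑ u, ∑ a, ∑ b,
        φ I a b * recombFlux ν I u a b * (g (glue I u a) - g (glue I u b)) := by
  rw [sum_mul_recombRHS hφsymm, Finset.mul_sum]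
  refine Finset.sum_congr rfl fun I hI => ?_
  rw [Finset.mul_sum]
  refine Finset.sum_congr rfl fun u _ => ?_
  exact two_mul_sum_sum_mul_of_antisymm (w := fun a b => φ I a b * recombFlux ν I u a b)
    (fun a b => by rw [hφsymm I hI b a, recombFlux_swap]; ring) fun a => g (glue I u a)

theorem sum_sum_sum_mul_recombFlux_eq_zero (ν : (∀ i, K i) → ℝ) (I : Finset Λ)
    (h : (∀ i : I, K i) → (∀ i : I, K i) → ℝ) :
    ∑ u, ∑ a, ∑ b, φ I a b * recombFlux ν I u a b * h a b = 0 := by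
  rw [Finset.sum_comm]
  refine Finset.sum_eq_zero fun a _ => ?_
  rw [Finset.sum_comm]
  refine Finset.sum_eq_zero fun b _ => ?_
  simp only [mul_right_comm _ _ (h a b), mul_assoc, ← Finset.mul_sum, sum_recombFlux, mul_zero]

theorem sum_recombRHS (hφsymm : ∀ I ∈ 𝒥, ∀ a b, φ I a b = φ I b a) (ν : (∀ i, K i) → ℝ) :
    ∑ x, recombRHS K 𝒥 φ ν x = 0 := by
  have h := two_mul_sum_mul_recombRHS hφsymm ν 1
  simpa using h

theorem sum_ite_recombRHS (hφsymm : ∀ I ∈ 𝒥, ∀ a b, φ I a b = φ I b a) (ν : (∀ i, K i) → ℝ)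
    (i : Λ) (c : K i) : ∑ x, (if x i = c then recombRHS K 𝒥 φ ν x else 0) = 0 := by
  have h := two_mul_sum_mul_recombRHS hφsymm ν (fun x => if x i = c then 1 else 0)
  simp only [ite_mul, one_mul, zero_mul] at h
  rw [← mul_eq_zero_iff_left two_ne_zero, h]
  refine Finset.sum_eq_zero fun I _ => ?_
  by_cases hi : i ∈ I
  · simp only [glue_of_mem hi]
    exact sum_sum_sum_mul_recombFlux_eq_zero ν I _
  · simp [glue_of_not_mem hi]

end Flux

section EntropyProduction

variable {Λ : Type*} [Fintype Λ] [DecidableEq Λ] {K : Λ → Type*} [∀ i, Fintype (K i)]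

theorem IsPMF.le_one {ν : (∀ i, K i) → ℝ} (hν : IsPMF K ν) (x : ∀ i, K i) : ν x ≤ 1 :=
  hν.2 ▸ Finset.single_le_sum (fun y _ => hν.1 y) (Finset.mem_univ x)

theorem isClosed_setOf_isPMF : IsClosed {ν : (∀ i, K i) → ℝ | IsPMF K ν} := by
  simp only [IsPMF, Set.ofPred_and, Set.ofPred_forall]
  exact (isClosed_iInter fun x => isClosed_le continuous_const (continuous_apply x)).inter
    (isClosed_eq (continuous_finsetSum _ fun x _ => continuous_apply x) continuous_const)

variable [∀ i, DecidableEq (K i)]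

def NoInfluxAtZeros (𝒥 : Finset (Finset Λ)) (ν : (∀ i, K i) → ℝ) : Prop :=
  ∀ I ∈ 𝒥, ∀ u a b, ν (glue I u a) = 0 → marginal K ν I a * ν (glue I u b) = 0

def separationDefect (𝒥 : Finset (Finset Λ))
    (φ : ∀ I : Finset Λ, (∀ i : I, K i) → (∀ i : I, K i) → ℝ) (ν : (∀ i, K i) → ℝ) : ℝ :=
  ∑ I ∈ 𝒥, ∑ u, ∑ a, ∑ b, φ I a b * recombFlux ν I u a b ^ 2

variable {ν : (∀ i, K i) → ℝ}

theorem marginal_nonneg (hν : ∀ x, 0 ≤ ν x) (I : Finset Λ) (a : ∀ i : I, K i) :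
    0 ≤ marginal K ν I a := by
  rw [marginal_eq_sum_glue]
  exact Finset.sum_nonneg fun u _ => hν _

theorem le_marginal (hν : ∀ x, 0 ≤ ν x) (I : Finset Λ) (u : ∀ i : (Iᶜ : Finset Λ), K i)
    (a : ∀ i : I, K i) : ν (glue I u a) ≤ marginal K ν I a := by
  rw [marginal_eq_sum_glue]
  exact Finset.single_le_sum (fun v _ => hν (glue I v a)) (Finset.mem_univ u)

theorem IsPMF.marginal_le_one (hν : IsPMF K ν) (I : Finset Λ) (a : ∀ i : I, K i) :
    marginal K ν I a ≤ 1 := by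
  rw [← hν.2, ← sum_marginal]
  exact Finset.single_le_sum (fun b _ => marginal_nonneg hν.1 I b) (Finset.mem_univ a)

variable {𝒥 : Finset (Finset Λ)} {φ : ∀ I : Finset Λ, (∀ i : I, K i) → (∀ i : I, K i) → ℝ}

theorem NoInfluxAtZeros.sq_recombFlux_le (hν : IsPMF K ν) (hno : NoInfluxAtZeros 𝒥 ν)
    {I : Finset Λ} (hI : I ∈ 𝒥) (u : ∀ i : (Iᶜ : Finset Λ), K i) (a b : ∀ i : I, K i) :
    recombFlux ν I u a b ^ 2 ≤ recombFlux ν I u a b *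
      (Real.log (marginal K ν I a) + Real.log (ν (glue I u b))
        - Real.log (marginal K ν I b) - Real.log (ν (glue I u a))) := by
  by_cases hzero : ν (glue I u a) = 0 ∨ ν (glue I u b) = 0
  · have : recombFlux ν I u a b = 0 := by
      rcases hzero with h | h
      · rw [recombFlux, hno I hI u a b h, h, mul_zero, sub_zero]
      · rw [recombFlux, hno I hI u b a h, h, mul_zero, sub_zero]
    simp [this]
  obtain ⟨ha, hb⟩ := not_or.mp hzero
  replace ha := (hν.1 _).lt_of_ne' ha
  replace hb := (hν.1 _).lt_of_ne' hb
  have hma := ha.trans_le (le_marginal hν.1 I u a)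
  have hmb := hb.trans_le (le_marginal hν.1 I u b)
  have key := sq_sub_le_sub_mul_log_sub (mul_pos hma hb)
    (mul_le_one₀ (hν.marginal_le_one I a) hb.le (hν.le_one _)) (mul_pos hmb ha)
    (mul_le_one₀ (hν.marginal_le_one I b) ha.le (hν.le_one _))
  rw [Real.log_mul hma.ne' hb.ne', Real.log_mul hmb.ne' ha.ne'] at key
  rw [recombFlux]
  linarith

theorem noInfluxAtZeros_of_recombRHS_eq_zero (hφpos : ∀ I ∈ 𝒥, ∀ a b, 0 < φ I a b)
    {ν : (∀ i, K i) → ℝ} (hν : ∀ x, 0 ≤ ν x) (h : ∀ x, ν x = 0 → recombRHS K 𝒥 φ ν x = 0) :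
    NoInfluxAtZeros 𝒥 ν := by
  intro I hI u a b hzero
  set x := glue I u a
  have hgain := h x hzero
  simp only [recombRHS, hzero, mul_zero, sub_zero] at hgain
  have hterm : ∀ J ∈ 𝒥, ∀ y, 0 ≤ φ J y (restrictW K J x) *
      marginal K ν J (restrictW K J x) * ν (recombW K J x y) :=
    fun J hJ y => mul_nonneg (mul_nonneg (hφpos J hJ _ _).le (marginal_nonneg hν _ _)) (hν _)
  have hI0 := (Finset.sum_eq_zero_iff_of_nonneg fun J hJ => Finset.sum_nonneg fun y _ =>
    hterm J hJ y).mp hgain I hI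
  have hb := (Finset.sum_eq_zero_iff_of_nonneg fun y _ => hterm I hI y).mp hI0 b
    (Finset.mem_univ b)
  rw [restrictW_glue, recombW_glue, mul_assoc] at hb
  exact (mul_eq_zero.mp hb).resolve_left (hφpos I hI b a).ne'

theorem two_mul_sum_log_mul_recombRHS_le (hφpos : ∀ I ∈ 𝒥, ∀ a b, 0 < φ I a b)
    (hφsymm : ∀ I ∈ 𝒥, ∀ a b, φ I a b = φ I b a) (hν : IsPMF K ν)
    (hno : NoInfluxAtZeros 𝒥 ν) :
    2 * ∑ x, Real.log (ν x) * recombRHS K 𝒥 φ ν x ≤ -separationDefect 𝒥 φ ν := by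
  rw [two_mul_sum_mul_recombRHS hφsymm, separationDefect, ← Finset.sum_neg_distrib]
  refine Finset.sum_le_sum fun I hI => ?_
  -- the logarithms of the marginals contribute nothing, by `sum_recombFlux`
  have hmarg := sum_sum_sum_mul_recombFlux_eq_zero (φ := φ) ν I
    fun a b => Real.log (marginal K ν I b) - Real.log (marginal K ν I a)
  rw [← add_zero (∑ u, _), ← hmarg]
  simp only [← Finset.sum_add_distrib, ← Finset.sum_neg_distrib, ← mul_add]
  refine Finset.sum_le_sum fun u _ => Finset.sum_le_sum fun a _ => Finset.sum_le_sum fun b _ => ?_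
  have := mul_le_mul_of_nonneg_left (hno.sq_recombFlux_le hν hI u a b) (hφpos I hI a b).le
  linarith

theorem separationDefect_nonneg (hφpos : ∀ I ∈ 𝒥, ∀ a b, 0 < φ I a b) :
    0 ≤ separationDefect 𝒥 φ ν :=
  Finset.sum_nonneg fun I hI => Finset.sum_nonneg fun _ _ => Finset.sum_nonneg fun a _ =>
    Finset.sum_nonneg fun b _ => mul_nonneg (hφpos I hI a b).le (sq_nonneg _)

theorem isSeparated_of_separationDefect_eq_zero (hφpos : ∀ I ∈ 𝒥, ∀ a b, 0 < φ I a b)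
    (hν : IsPMF K ν) (h : separationDefect 𝒥 φ ν = 0) : IsSeparated K 𝒥 ν := by
  have hterm : ∀ I ∈ 𝒥, ∀ u a b, 0 ≤ φ I a b * recombFlux ν I u a b ^ 2 :=
    fun I hI _ a b => mul_nonneg (hφpos I hI a b).le (sq_nonneg _)
  intro I hI x
  set u := restrictW K Iᶜ x
  set a := restrictW K I x
  have hflux : ∀ b, recombFlux ν I u a b = 0 := by
    intro b
    have h1 := (Finset.sum_eq_zero_iff_of_nonneg fun I hI => Finset.sum_nonneg fun u _ =>
      Finset.sum_nonneg fun a _ => Finset.sum_nonneg fun b _ => hterm I hI u a b).mp h I hI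
    have h2 := (Finset.sum_eq_zero_iff_of_nonneg fun u _ => Finset.sum_nonneg fun a _ =>
      Finset.sum_nonneg fun b _ => hterm I hI u a b).mp h1 u (Finset.mem_univ u)
    have h3 := (Finset.sum_eq_zero_iff_of_nonneg fun a _ => Finset.sum_nonneg fun b _ =>
      hterm I hI u a b).mp h2 a (Finset.mem_univ a)
    have h4 := (Finset.sum_eq_zero_iff_of_nonneg fun b _ => hterm I hI u a b).mp h3 b
      (Finset.mem_univ b)
    exact pow_eq_zero_iff two_ne_zero |>.mp <|
      (mul_eq_zero.mp h4).resolve_left (hφpos I hI a b).ne'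
  have hsum := Finset.sum_eq_zero fun b (_ : b ∈ Finset.univ) => hflux b
  simp only [recombFlux, Finset.sum_sub_distrib, ← Finset.mul_sum, ← Finset.sum_mul,
    ← marginal_compl_eq_sum_glue, sum_marginal, hν.2, one_mul, sub_eq_zero] at hsum
  conv_lhs => rw [← glue_restrictW I x]
  exact hsum.symm

end EntropyProduction

section CrossEntropy

variable {Λ : Type*} [Fintype Λ] [DecidableEq Λ] {K : Λ → Type*}
  [∀ i, Fintype (K i)] [∀ i, DecidableEq (K i)] {ρ : (∀ i, K i) → ℝ}

theorem le_marg1 (hρ : ∀ x, 0 ≤ ρ x) (i : Λ) (x : ∀ i, K i) : ρ x ≤ marg1 K ρ i (x i) := by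
  have := Finset.single_le_sum (f := fun y => if y i = x i then ρ y else 0)
    (fun y _ => by split_ifs <;> simp [hρ y]) (Finset.mem_univ x)
  simpa [marg1] using this

theorem sum_mul_apply_eq_sum_marg1_mul (ρ : (∀ i, K i) → ℝ) (i : Λ) (f : K i → ℝ) :
    ∑ x, ρ x * f (x i) = ∑ c, marg1 K ρ i c * f c := by
  simp only [marg1, Finset.sum_mul, ite_mul, zero_mul]
  rw [Finset.sum_comm]
  simp

theorem sum_mul_log_prod_marg1 (hρ : ∀ x, 0 ≤ ρ x) :
    ∑ x, ρ x * Real.log (∏ i, marg1 K ρ i (x i)) =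
      ∑ i, ∑ c, marg1 K ρ i c * Real.log (marg1 K ρ i c) := by
  have hsplit : ∀ x, ρ x * Real.log (∏ i, marg1 K ρ i (x i)) =
      ∑ i, ρ x * Real.log (marg1 K ρ i (x i)) := by
    intro x
    rcases (hρ x).eq_or_lt with hx | hx
    · simp [← hx]
    rw [Real.log_prod fun i _ => (hx.trans_le (le_marg1 hρ i x)).ne', Finset.mul_sum]
  simp only [hsplit]
  rw [Finset.sum_comm]
  exact Finset.sum_congr rfl fun i _ =>
    sum_mul_apply_eq_sum_marg1_mul ρ i fun c => Real.log (marg1 K ρ i c)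

end CrossEntropy

section MaxEntropy

variable {Λ : Type*} [Fintype Λ] [DecidableEq Λ] {K : Λ → Type*}
  [∀ i, Fintype (K i)] [∀ i, DecidableEq (K i)]

-- Among measures with given one-dimensional marginals, the product one uniquely maximises entropy.
theorem eq_of_marg1_eq_of_negEntropy_eq {ρ π : (∀ i, K i) → ℝ} (hρ : IsPMF K ρ)
    (hπ : IsPMF K π) (hprod : ∀ x, π x = ∏ i, marg1 K π i (x i))
    (hmarg : ∀ i c, marg1 K ρ i c = marg1 K π i c) (hH : negEntropy ρ = negEntropy π) :
    ρ = π := by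
  have hπρ : ∀ x, π x = ∏ i, marg1 K ρ i (x i) := fun x => by
    rw [hprod x]
    simp only [hmarg]
  have hcross : ∑ x, ρ x * Real.log (π x) = negEntropy π := calc
    _ = ∑ x, ρ x * Real.log (∏ i, marg1 K ρ i (x i)) := by simp only [← hπρ]
    _ = ∑ i, ∑ c, marg1 K ρ i c * Real.log (marg1 K ρ i c) := sum_mul_log_prod_marg1 hρ.1
    _ = ∑ i, ∑ c, marg1 K π i c * Real.log (marg1 K π i c) := by simp only [hmarg]
    _ = ∑ x, π x * Real.log (∏ i, marg1 K π i (x i)) := (sum_mul_log_prod_marg1 hπ.1).symm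
    _ = negEntropy π := by simp only [negEntropy, ← hprod]
  refine eq_of_sum_mul_log_eq hρ.1 hπ.1 (hρ.2.trans hπ.2.symm) (fun x hx => ?_) ?_
  · rw [hprod] at hx
    obtain ⟨i, -, hi⟩ := Finset.prod_eq_zero_iff.mp hx
    exact le_antisymm ((le_marg1 hρ.1 i x).trans_eq (hmarg i (x i) ▸ hi)) (hρ.1 x)
  · rw [← negEntropy, hH, hcross]

end MaxEntropy

section Continuity

variable {Λ : Type*} [Fintype Λ] [DecidableEq Λ] {K : Λ → Type*}
  [∀ i, Fintype (K i)] [∀ i, DecidableEq (K i)]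

theorem continuous_marginal (I : Finset Λ) (a : ∀ i : I, K i) :
    Continuous fun ν : (∀ i, K i) → ℝ => marginal K ν I a :=
  continuous_finsetSum _ fun x _ => by split_ifs; exacts [continuous_apply x, continuous_const]

theorem continuous_marg1 (i : Λ) (c : K i) : Continuous fun ν : (∀ i, K i) → ℝ => marg1 K ν i c :=
  continuous_finsetSum _ fun x _ => by split_ifs; exacts [continuous_apply x, continuous_const]

theorem continuous_separationDefect (𝒥 : Finset (Finset Λ))
    (φ : ∀ I : Finset Λ, (∀ i : I, K i) → (∀ i : I, K i) → ℝ) :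
    Continuous (separationDefect 𝒥 φ) := by
  unfold separationDefect recombFlux
  have := continuous_marginal (K := K)
  fun_prop

end Continuity

section Solution

variable {Λ : Type*} [Fintype Λ] [DecidableEq Λ] {K : Λ → Type*}
  [∀ i, Fintype (K i)] [∀ i, DecidableEq (K i)]
  {𝒥 : Finset (Finset Λ)} {φ : ∀ I : Finset Λ, (∀ i : I, K i) → (∀ i : I, K i) → ℝ}

theorem neg_mul_le_recombRHS (hφ : ∀ I ∈ 𝒥, ∀ a b, 0 ≤ φ I a b) {ν : (∀ i, K i) → ℝ}
    (hν : IsPMF K ν) (x : ∀ i, K i) :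
    -((∑ I ∈ 𝒥, ∑ y, φ I (restrictW K I x) y) * ν x) ≤ recombRHS K 𝒥 φ ν x := by
  simp only [recombRHS, Finset.sum_mul, ← Finset.sum_neg_distrib]
  refine Finset.sum_le_sum fun I hI => Finset.sum_le_sum fun y _ => ?_
  have hgain : 0 ≤ φ I y (restrictW K I x) * marginal K ν I (restrictW K I x) *
      ν (recombW K I x y) :=
    mul_nonneg (mul_nonneg (hφ I hI _ _) (marginal_nonneg hν.1 _ _)) (hν.1 _)
  have hloss := mul_le_mul_of_nonneg_left (hν.marginal_le_one I y)
    (mul_nonneg (hφ I hI (restrictW K I x) y) (hν.1 x))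
  nlinarith

variable (𝒥 φ) in
def IsRecombSolution (μ : ℝ → (∀ i, K i) → ℝ) : Prop :=
  ∀ x, ∀ t ∈ Set.Ici (0 : ℝ),
    HasDerivWithinAt (fun s => μ s x) (recombRHS K 𝒥 φ (μ t) x) (Set.Ici 0) t

namespace IsRecombSolution

variable {μ : ℝ → (∀ i, K i) → ℝ}

theorem pos_of_pos (hsol : IsRecombSolution 𝒥 φ μ) (hφ : ∀ I ∈ 𝒥, ∀ a b, 0 ≤ φ I a b)
    (hpmf : ∀ t ≥ 0, IsPMF K (μ t)) {x : ∀ i, K i} {s t : ℝ} (hs : 0 ≤ s) (hst : s ≤ t)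
    (hpos : 0 < μ s x) : 0 < μ t x :=
  pos_of_hasDerivWithinAt_ge_neg_mul
    (fun r hr => (hsol x r (hs.trans hr)).mono (Set.Ici_subset_Ici.mpr hs))
    (fun r hr => neg_mul_le_recombRHS hφ (hpmf r (hs.trans hr)) x) hpos hst

theorem eventually_pos_or_forall_eq_zero (hsol : IsRecombSolution 𝒥 φ μ)
    (hφ : ∀ I ∈ 𝒥, ∀ a b, 0 ≤ φ I a b) (hpmf : ∀ t ≥ 0, IsPMF K (μ t)) :
    ∀ᶠ t in atTop, ∀ x, 0 < μ t x ∨ ∀ s ≥ 0, μ s x = 0 := by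
  refine eventually_all.mpr fun x => ?_
  by_cases h : ∃ s ≥ 0, 0 < μ s x
  · obtain ⟨s, hs, hpos⟩ := h
    filter_upwards [eventually_ge_atTop s] with t ht
    exact Or.inl (hsol.pos_of_pos hφ hpmf hs ht hpos)
  · push Not at h
    exact Eventually.of_forall fun _ => Or.inr fun s hs => le_antisymm (h s hs) ((hpmf s hs).1 x)

theorem recombRHS_eq_zero (hsol : IsRecombSolution 𝒥 φ μ) {x : ∀ i, K i}
    (hx : ∀ s ≥ 0, μ s x = 0) {t : ℝ} (ht : 0 ≤ t) : recombRHS K 𝒥 φ (μ t) x = 0 :=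
  (uniqueDiffOn_Ici 0 t ht).eq_deriv _ (hsol x t ht)
    ((hasDerivWithinAt_const t _ 0).congr (fun s hs => hx s hs) (hx t ht))

theorem marg1_eq (hsol : IsRecombSolution 𝒥 φ μ)
    (hφsymm : ∀ I ∈ 𝒥, ∀ a b, φ I a b = φ I b a) (i : Λ) (c : K i) {t : ℝ} (ht : 0 ≤ t) :
    marg1 K (μ t) i c = marg1 K (μ 0) i c := by
  have hderiv : ∀ s ∈ Set.Ici (0 : ℝ), HasDerivWithinAt (fun s => marg1 K (μ s) i c) 0
      (Set.Ici 0) s := by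
    intro s hs
    refine (HasDerivWithinAt.fun_sum (u := Finset.univ)
      (A := fun x s => if x i = c then μ s x else 0) fun x _ => ?_).congr_deriv
        (sum_ite_recombRHS hφsymm (μ s) i c)
    split_ifs
    exacts [hsol x s hs, hasDerivWithinAt_const s _ 0]
  refine constant_of_has_deriv_right_zero (fun s hs => (hderiv s hs.1).continuousWithinAt.mono
    Set.Icc_subset_Ici_self) (fun s hs => (hderiv s hs.1).mono (Set.Ici_subset_Ici.mpr hs.1)) t
    ⟨ht, le_rfl⟩

theorem hasDerivWithinAt_negEntropy (hsol : IsRecombSolution 𝒥 φ μ)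
    (hφsymm : ∀ I ∈ 𝒥, ∀ a b, φ I a b = φ I b a) {T : ℝ} (hT : 0 ≤ T)
    (hdich : ∀ t ≥ T, ∀ x, 0 < μ t x ∨ ∀ s ≥ 0, μ s x = 0) {t : ℝ} (ht : t ∈ Set.Ici T) :
    HasDerivWithinAt (fun s => negEntropy (μ s))
      (∑ x, Real.log (μ t x) * recombRHS K 𝒥 φ (μ t) x) (Set.Ici T) t := by
  have ht0 : 0 ≤ t := hT.trans ht
  have hterm : ∀ x, HasDerivWithinAt (fun s => μ s x * Real.log (μ s x))
      ((Real.log (μ t x) + 1) * recombRHS K 𝒥 φ (μ t) x) (Set.Ici T) t := by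
    intro x
    have hμ := (hsol x t ht0).mono (Set.Ici_subset_Ici.mpr hT)
    rcases hdich t ht x with hpos | hzero
    · exact (Real.hasDerivAt_mul_log hpos.ne').comp_hasDerivWithinAt t hμ
    · rw [hsol.recombRHS_eq_zero hzero ht0, mul_zero]
      exact (hasDerivWithinAt_const t _ 0).congr (fun s hs => by simp [hzero s (hT.trans hs)])
        (by simp [hzero t ht0])
  refine (HasDerivWithinAt.fun_sum (u := Finset.univ) fun x _ => hterm x).congr_deriv ?_
  simp only [add_mul, one_mul, Finset.sum_add_distrib, sum_recombRHS hφsymm, add_zero]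

-- `negEntropy` is a Lyapunov function, strict as long as the solution is not separated.
theorem exists_hasDerivWithinAt_negEntropy_le (hsol : IsRecombSolution 𝒥 φ μ)
    (hφpos : ∀ I ∈ 𝒥, ∀ a b, 0 < φ I a b) (hφsymm : ∀ I ∈ 𝒥, ∀ a b, φ I a b = φ I b a)
    (hpmf : ∀ t ≥ 0, IsPMF K (μ t)) :
    ∃ T ≥ 0, ∃ D : ℝ → ℝ, ∀ t ∈ Set.Ici T, HasDerivWithinAt (fun s => negEntropy (μ s))
      (D t) (Set.Ici T) t ∧ D t ≤ -(separationDefect 𝒥 φ (μ t) / 2) := by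
  obtain ⟨T, hdich⟩ := eventually_atTop.mp
    (hsol.eventually_pos_or_forall_eq_zero (fun I hI a b => (hφpos I hI a b).le) hpmf)
  have hdich' : ∀ t ≥ max T 0, ∀ x, 0 < μ t x ∨ ∀ s ≥ 0, μ s x = 0 :=
    fun t ht => hdich t (le_of_max_le_left ht)
  refine ⟨max T 0, le_max_right T 0, _, fun t ht =>
    ⟨hsol.hasDerivWithinAt_negEntropy hφsymm (le_max_right T 0) hdich' ht, ?_⟩⟩
  have ht0 : 0 ≤ t := le_of_max_le_right ht
  have hno : NoInfluxAtZeros 𝒥 (μ t) := noInfluxAtZeros_of_recombRHS_eq_zero hφpos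
    (hpmf t ht0).1 fun x hx => hsol.recombRHS_eq_zero
      ((hdich' t ht x).resolve_left hx.not_gt) ht0
  have := two_mul_sum_log_mul_recombRHS_le hφpos hφsymm (hpmf t ht0) hno
  linarith

theorem exists_tendsto_negEntropy (hsol : IsRecombSolution 𝒥 φ μ)
    (hφpos : ∀ I ∈ 𝒥, ∀ a b, 0 < φ I a b) (hφsymm : ∀ I ∈ 𝒥, ∀ a b, φ I a b = φ I b a)
    (hpmf : ∀ t ≥ 0, IsPMF K (μ t)) : ∃ L, Tendsto (fun t => negEntropy (μ t)) atTop (𝓝 L) := by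
  obtain ⟨T, hT, D, hD⟩ := hsol.exists_hasDerivWithinAt_negEntropy_le hφpos hφsymm hpmf
  refine exists_tendsto_of_antitoneOn_Ici (antitoneOn_Ici_of_hasDerivWithinAt_nonpos
    (fun t ht => (hD t ht).1) fun t ht => ?_) fun t ht =>
      one_sub_card_le_negEntropy (hpmf t (hT.trans ht)).1 (hpmf t (hT.trans ht)).2
  have := separationDefect_nonneg (ν := μ t) hφpos
  linarith [(hD t (Set.mem_Ici_of_Ioi ht)).2]

theorem frequently_separationDefect_lt (hsol : IsRecombSolution 𝒥 φ μ)
    (hφpos : ∀ I ∈ 𝒥, ∀ a b, 0 < φ I a b) (hφsymm : ∀ I ∈ 𝒥, ∀ a b, φ I a b = φ I b a)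
    (hpmf : ∀ t ≥ 0, IsPMF K (μ t)) {ε : ℝ} (hε : 0 < ε) :
    ∃ᶠ t in atTop, separationDefect 𝒥 φ (μ t) < ε := by
  obtain ⟨T, hT, D, hD⟩ := hsol.exists_hasDerivWithinAt_negEntropy_le hφpos hφsymm hpmf
  have hbdd : ∀ t ∈ Set.Ici T, 1 - Fintype.card (∀ i, K i) ≤ negEntropy (μ t) := fun t ht =>
    one_sub_card_le_negEntropy (hpmf t (hT.trans ht)).1 (hpmf t (hT.trans ht)).2
  exact (frequently_lt_of_hasDerivWithinAt_le_neg (fun t ht => (hD t ht).1)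
    (fun t ht => (hD t ht).2) hbdd (half_pos hε)).mono fun t ht => by linarith

theorem marg1_eq_of_mapClusterPt (hsol : IsRecombSolution 𝒥 φ μ)
    (hφsymm : ∀ I ∈ 𝒥, ∀ a b, φ I a b = φ I b a) {ρ : (∀ i, K i) → ℝ}
    (hρ : MapClusterPt ρ atTop μ) (i : Λ) (c : K i) : marg1 K ρ i c = marg1 K (μ 0) i c :=
  hρ.apply_eq_of_tendsto (continuous_marg1 i c) <| tendsto_const_nhds.congr' <|
    (eventually_ge_atTop 0).mono fun _ ht => (hsol.marg1_eq hφsymm i c ht).symm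

end IsRecombSolution

end Solution

theorem tendsto_product_of_T0_general {Λ : Type*} [Fintype Λ] [DecidableEq Λ]
    (K : Λ → Type*) [∀ i, Fintype (K i)] [∀ i, DecidableEq (K i)]
    (𝒥 : Finset (Finset Λ)) (hT0 : IsT0 𝒥)
    (φ : ∀ I : Finset Λ, (∀ i : I, K i) → (∀ i : I, K i) → ℝ)
    (hφpos : ∀ I ∈ 𝒥, ∀ a b, 0 < φ I a b)
    (hφsymm : ∀ I ∈ 𝒥, ∀ a b, φ I a b = φ I b a)
    (μ : ℝ → (∀ i, K i) → ℝ)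
    (hsol : ∀ x, ∀ t ∈ Set.Ici (0 : ℝ),
      HasDerivWithinAt (fun s => μ s x) (recombRHS K 𝒥 φ (μ t) x) (Set.Ici (0 : ℝ)) t)
    (hpmf : ∀ t ∈ Set.Ici (0 : ℝ), IsPMF K (μ t)) :
    ∀ x, Filter.Tendsto (fun t => μ t x) Filter.atTop
      (𝓝 (∏ i, marg1 K (μ 0) i (x i))) := by
  have hsol : IsRecombSolution 𝒥 φ μ := hsol
  obtain ⟨L, hL⟩ := hsol.exists_tendsto_negEntropy hφpos hφsymm hpmf
  have hcl : ∀ ρ, MapClusterPt ρ atTop μ → IsPMF K ρ := fun ρ hρ =>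
    isClosed_setOf_isPMF.mem_of_mapClusterPt hρ ((eventually_ge_atTop 0).mono hpmf)
  have hcpt := isCompact_univ_pi fun _ : (∀ i, K i) => isCompact_Icc (a := (0 : ℝ)) (b := 1)
  have hmem : ∀ᶠ t in atTop, μ t ∈ Set.univ.pi fun _ => Set.Icc 0 1 :=
    (eventually_ge_atTop 0).mono fun t ht x _ => ⟨(hpmf t ht).1 x, (hpmf t ht).le_one x⟩
  -- a cluster point along which entropy production vanishes is separated, hence a product
  obtain ⟨ν, -, hν, hΦ⟩ := hcpt.exists_mapClusterPt_le_of_frequently_lt hmem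
    (continuous_separationDefect 𝒥 φ) fun _ =>
      hsol.frequently_separationDefect_lt hφpos hφsymm hpmf
  have hνprod : ∀ x, ν x = ∏ i, marg1 K ν i (x i) := eq_prod_marg1_of_isSeparated hT0
    (isSeparated_of_separationDefect_eq_zero hφpos (hcl ν hν)
      (le_antisymm hΦ (separationDefect_nonneg hφpos))) (hcl ν hν).2
  -- every cluster point has the marginals and the entropy of `ν`, so it is `ν`
  have hlim : Tendsto μ atTop (𝓝 ν) := hcpt.tendsto_nhds_of_unique_mapClusterPt hmem
    fun ρ _ hρ => eq_of_marg1_eq_of_negEntropy_eq (hcl ρ hρ) (hcl ν hν) hνprod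
      (fun i c => (hsol.marg1_eq_of_mapClusterPt hφsymm hρ i c).trans
        (hsol.marg1_eq_of_mapClusterPt hφsymm hν i c).symm)
      ((hρ.apply_eq_of_tendsto continuous_negEntropy hL).trans
        (hν.apply_eq_of_tendsto continuous_negEntropy hL).symm)
  intro x
  have hνx : ν x = ∏ i, marg1 K (μ 0) i (x i) := by
    rw [hνprod x]
    exact Finset.prod_congr rfl fun i _ => hsol.marg1_eq_of_mapClusterPt hφsymm hν i (x i)
  exact hνx ▸ tendsto_pi_nhds.mp hlim x

/-- for a `T₀`-system, any solution of the recombination equation consisting of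
probability mass functions converges pointwise, as `t → ∞`, to the product of the
one-dimensional marginals of the initial condition. -/
theorem tendsto_product_of_T0 {Λ : Type*} [Fintype Λ] [DecidableEq Λ] [Nonempty Λ]
    (K : Λ → Type*) [∀ i, Fintype (K i)] [∀ i, DecidableEq (K i)] [∀ i, Nonempty (K i)]
    (𝒥 : Finset (Finset Λ)) (hT0 : IsT0 𝒥)
    (φ : ∀ I : Finset Λ, (∀ i : I, K i) → (∀ i : I, K i) → ℝ)
    (hφpos : ∀ I ∈ 𝒥, ∀ a b, 0 < φ I a b)
    (hφsymm : ∀ I ∈ 𝒥, ∀ a b, φ I a b = φ I b a)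
    (μ : ℝ → (∀ i, K i) → ℝ)
    (hsol : ∀ x, ∀ t ∈ Set.Ici (0 : ℝ),
      HasDerivWithinAt (fun s => μ s x) (recombRHS K 𝒥 φ (μ t) x) (Set.Ici (0 : ℝ)) t)
    (hpmf : ∀ t ∈ Set.Ici (0 : ℝ), IsPMF K (μ t)) :
    ∀ x, Filter.Tendsto (fun t => μ t x) Filter.atTop
      (𝓝 (∏ i, marg1 K (μ 0) i (x i))) :=
  tendsto_product_of_T0_general K 𝒥 hT0 φ hφpos hφsymm μ hsol hpmf
end

section
/- Along any solution of the recombination equation, every one-dimensional marginal is constant in time: if t ↦ μ^t is a solution of the recombination equation, then for every i ∈ Λ, every a ∈ K_i and all t, μ^t_i(a) = μ^0_i(a). -/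
/-!
The recombination operator is a sum of frame contributions, and each one is orthogonal to every
test function `x ↦ [x i = a]`. Pairing a frame term with a test function `f` and exchanging
`(x, y) ↦ ((x_{Λ∖I}, y_I), x_I)` (an involution) turns the gain term into a loss term, leaving
`∑ (f (x_{Λ∖I}, y_I) - f x) φ_I(x_I, y_I) μ_I(y_I) μ(x)`. If `i ∉ I` the bracket vanishes; if
`i ∈ I` the sum only sees `x` through `x_I`, so it becomes a double sum over `I`-words that is
antisymmetric because `φ_I` is symmetric.
-/

open Finset

section Words

variable {Λ : Type*} [DecidableEq Λ] {K : Λ → Type*} {I : Finset Λ}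

@[simp]
lemma restrictW_recombW (x : ∀ i, K i) (y : ∀ i : I, K i) :
    restrictW K I (recombW K I x y) = y := by
  funext j
  simp [restrictW, recombW, j.2]

@[simp]
lemma recombW_recombW_restrictW (x : ∀ i, K i) (y : ∀ i : I, K i) :
    recombW K I (recombW K I x y) (restrictW K I x) = x := by
  funext j
  by_cases h : j ∈ I <;> simp [recombW, restrictW, h]

lemma recombW_apply_of_notMem (x : ∀ i, K i) (y : ∀ i : I, K i) {i : Λ} (hi : i ∉ I) :
    recombW K I x y i = x i :=
  dif_neg hi

variable (K I) in
def recombSwap : Equiv.Perm ((∀ i, K i) × (∀ i : I, K i)) :=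
  Function.Involutive.toPerm (fun p => (recombW K I p.1 p.2, restrictW K I p.1))
    fun p => by simp

@[simp]
lemma recombSwap_apply (p : (∀ i, K i) × (∀ i : I, K i)) :
    recombSwap K I p = (recombW K I p.1 p.2, restrictW K I p.1) :=
  rfl

end Words

lemma sum_sum_eq_zero_of_antisymm {α M : Type*} [Fintype α] [AddCommGroup M]
    [IsAddTorsionFree M] {F : α → α → M} (hF : ∀ u y, F u y = -F y u) :
    ∑ u, ∑ y, F u y = 0 := by
  refine self_eq_neg.mp ?_
  calc ∑ u, ∑ y, F u y = ∑ y, ∑ u, F u y := sum_comm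
    _ = ∑ y, ∑ u, -F y u := sum_congr rfl fun y _ => sum_congr rfl fun u _ => hF u y
    _ = -∑ u, ∑ y, F u y := by simp only [sum_neg_distrib]

section Marginals

variable {Λ : Type*} [Fintype Λ] [DecidableEq Λ] {K : Λ → Type*}
  [∀ i, Fintype (K i)] [∀ i, DecidableEq (K i)]

lemma sum_comp_restrictW_mul (μ : (∀ i, K i) → ℝ) (I : Finset Λ) (h : (∀ i : I, K i) → ℝ) :
    ∑ x, h (restrictW K I x) * μ x = ∑ u, h u * marginal K μ I u := by
  simp only [marginal, mul_sum, mul_ite, mul_zero]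
  rw [sum_comm]
  simp

lemma marg1_eq_sum_indicator_mul (μ : (∀ i, K i) → ℝ) (i : Λ) (a : K i) :
    marg1 K μ i a = ∑ x, (if x i = a then 1 else 0) * μ x := by
  simp only [marg1, ite_mul, one_mul, zero_mul]

lemma hasDerivAt_marg1 {μ : ℝ → (∀ i, K i) → ℝ} {μ' : (∀ i, K i) → ℝ} {t : ℝ}
    (hμ : ∀ x, HasDerivAt (fun s => μ s x) (μ' x) t) (i : Λ) (a : K i) :
    HasDerivAt (fun s => marg1 K (μ s) i a) (marg1 K μ' i a) t := by
  simp only [marg1_eq_sum_indicator_mul]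
  exact HasDerivAt.fun_sum fun x _ => (hμ x).const_mul _

end Marginals

section FrameTerm

variable {Λ : Type*} [Fintype Λ] [DecidableEq Λ] {K : Λ → Type*}
  [∀ i, Fintype (K i)] [∀ i, DecidableEq (K i)]

variable (K) in
def recombFrameRHS (I : Finset Λ) (φ : (∀ i : I, K i) → (∀ i : I, K i) → ℝ)
    (μ : (∀ i, K i) → ℝ) (x : ∀ i, K i) : ℝ :=
  ∑ y : ∀ i : I, K i,
    (φ y (restrictW K I x) * marginal K μ I (restrictW K I x) * μ (recombW K I x y)
      - φ (restrictW K I x) y * marginal K μ I y * μ x)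

lemma recombRHS_eq_sum_recombFrameRHS (𝒥 : Finset (Finset Λ))
    (φ : ∀ I : Finset Λ, (∀ i : I, K i) → (∀ i : I, K i) → ℝ) (μ : (∀ i, K i) → ℝ)
    (x : ∀ i, K i) :
    recombRHS K 𝒥 φ μ x = ∑ I ∈ 𝒥, recombFrameRHS K I (φ I) μ x :=
  rfl

variable {I : Finset Λ} {φ : (∀ i : I, K i) → (∀ i : I, K i) → ℝ}

lemma sum_mul_recombFrameRHS (f μ : (∀ i, K i) → ℝ) :
    ∑ x, f x * recombFrameRHS K I φ μ x =
      ∑ x, ∑ y, (f (recombW K I x y) - f x) *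
        (φ (restrictW K I x) y * marginal K μ I y * μ x) := by
  have gain : ∑ x, ∑ y, f x * (φ y (restrictW K I x) * marginal K μ I (restrictW K I x) *
        μ (recombW K I x y)) =
      ∑ x, ∑ y, f (recombW K I x y) * (φ (restrictW K I x) y * marginal K μ I y * μ x) := by
    simp only [← Fintype.sum_prod_type']
    rw [← Equiv.sum_comp (recombSwap K I)]
    simp
  simp only [recombFrameRHS, mul_sum, mul_sub, sum_sub_distrib, gain, sub_mul]

lemma sum_mul_recombFrameRHS_eq_zero_of_recombW_invariant {f : (∀ i, K i) → ℝ}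
    (hf : ∀ x y, f (recombW K I x y) = f x) (μ : (∀ i, K i) → ℝ) :
    ∑ x, f x * recombFrameRHS K I φ μ x = 0 := by
  simp [sum_mul_recombFrameRHS, hf]

lemma sum_comp_restrictW_mul_recombFrameRHS_eq_zero (hφ : ∀ a b, φ a b = φ b a)
    (h : (∀ i : I, K i) → ℝ) (μ : (∀ i, K i) → ℝ) :
    ∑ x, h (restrictW K I x) * recombFrameRHS K I φ μ x = 0 := by
  set G : (∀ i : I, K i) → ℝ := fun u => ∑ y, (h y - h u) * φ u y * marginal K μ I y
  calc ∑ x, h (restrictW K I x) * recombFrameRHS K I φ μ x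
      = ∑ x, ∑ y, (h y - h (restrictW K I x)) *
          (φ (restrictW K I x) y * marginal K μ I y * μ x) := by
        rw [sum_mul_recombFrameRHS]
        simp only [restrictW_recombW]
    _ = ∑ x, G (restrictW K I x) * μ x := by
        simp only [G, sum_mul]
        exact sum_congr rfl fun x _ => sum_congr rfl fun y _ => by ring
    _ = ∑ u, ∑ y, (h y - h u) * φ u y * marginal K μ I y * marginal K μ I u := by
        rw [sum_comp_restrictW_mul]
        simp only [G, sum_mul]
    _ = 0 := sum_sum_eq_zero_of_antisymm fun u y => by rw [hφ u y]; ring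

end FrameTerm

lemma marg1_recombRHS {Λ : Type*} [Fintype Λ] [DecidableEq Λ] {K : Λ → Type*}
    [∀ i, Fintype (K i)] [∀ i, DecidableEq (K i)] {𝒥 : Finset (Finset Λ)}
    {φ : ∀ I : Finset Λ, (∀ i : I, K i) → (∀ i : I, K i) → ℝ}
    (hφ : ∀ I ∈ 𝒥, ∀ a b, φ I a b = φ I b a) (μ : (∀ i, K i) → ℝ) (i : Λ) (a : K i) :
    marg1 K (recombRHS K 𝒥 φ μ) i a = 0 := by
  simp only [marg1_eq_sum_indicator_mul, recombRHS_eq_sum_recombFrameRHS, mul_sum]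
  rw [sum_comm]
  refine sum_eq_zero fun I hI => ?_
  by_cases hi : i ∈ I
  · exact sum_comp_restrictW_mul_recombFrameRHS_eq_zero (hφ I hI)
      (fun u => if u ⟨i, hi⟩ = a then 1 else 0) μ
  · exact sum_mul_recombFrameRHS_eq_zero_of_recombW_invariant
      (fun x y => by rw [recombW_apply_of_notMem x y hi]) μ

theorem marg1_constant_general {Λ : Type*} [Fintype Λ] [DecidableEq Λ]
    (K : Λ → Type*) [∀ i, Fintype (K i)] [∀ i, DecidableEq (K i)]
    (𝒥 : Finset (Finset Λ))
    (φ : ∀ I : Finset Λ, (∀ i : I, K i) → (∀ i : I, K i) → ℝ)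
    (hφsymm : ∀ I ∈ 𝒥, ∀ a b, φ I a b = φ I b a)
    (μ : ℝ → (∀ i, K i) → ℝ)
    (hsol : ∀ x t, HasDerivAt (fun s => μ s x) (recombRHS K 𝒥 φ (μ t) x) t) :
    ∀ i : Λ, ∀ a : K i, ∀ t : ℝ, marg1 K (μ t) i a = marg1 K (μ 0) i a := by
  intro i a t
  have hderiv : ∀ s, HasDerivAt (fun r => marg1 K (μ r) i a) 0 s := fun s => by
    simpa only [marg1_recombRHS hφsymm] using hasDerivAt_marg1 (fun x => hsol x s) i a
  exact is_const_of_deriv_eq_zero (fun s => (hderiv s).differentiableAt)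
    (fun s => (hderiv s).deriv) t 0

/-- along any solution of the recombination equation, every one-dimensional
marginal is constant in time. -/
theorem marg1_constant {Λ : Type*} [Fintype Λ] [DecidableEq Λ] [Nonempty Λ]
    (K : Λ → Type*) [∀ i, Fintype (K i)] [∀ i, DecidableEq (K i)] [∀ i, Nonempty (K i)]
    (𝒥 : Finset (Finset Λ))
    (φ : ∀ I : Finset Λ, (∀ i : I, K i) → (∀ i : I, K i) → ℝ)
    (hφpos : ∀ I ∈ 𝒥, ∀ a b, 0 < φ I a b)
    (hφsymm : ∀ I ∈ 𝒥, ∀ a b, φ I a b = φ I b a)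
    (μ : ℝ → (∀ i, K i) → ℝ)
    (hsol : ∀ x t, HasDerivAt (fun s => μ s x) (recombRHS K 𝒥 φ (μ t) x) t) :
    ∀ i : Λ, ∀ a : K i, ∀ t : ℝ, marg1 K (μ t) i a = marg1 K (μ 0) i a :=
  marg1_constant_general K 𝒥 φ hφsymm μ hsol
end
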